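/- arXiv:2011.03944 — 2 statements merged into one kernel-verified Lean document; each statement's English description precedes it below -/
import Mathlib

section
/- Let $u\in L^1_{loc}(\Omega)$ on open $\Omega\subseteq\mathbb{R}^d$ be locally essentially bounded below. Suppose $u$ satisfies the De Giorgi property (D): for every cube $Q_\rho(y)\subset\Omega$, all $a\in(0,1)$, $M>0$, and $\mu^-\le \operatorname{ess\,inf}_{Q_\rho(y)}u$, there exists $\nu\in(0,1)$ depending only on $a$, $M$, $\mu^-$ (but not on $\rho$ or $y$) such that $|\{x\in Q_\rho(y): u(x)\le \mu^-+M\}|\le \nu|Q_\rho(y)|$ implies $u\ge \mu^-+aM$ a.e. in $Q_{\rho/2}(y)$. Then $u(x)=u_*(x)$ at every Lebesgue point $x$ of $u$; in particular $u_*$ is a lower semicontinuous representative of $u$ (i.e. $u=u_*$ a.e.). -/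
/-!
At a Lebesgue point `x`, the averages of `|u x - u|` over `ball x r` tend to `0`. Since the
essential infimum of `u` on a ball is at most `u x` plus such an average, `u_* x ≤ u x`.
Conversely, if `u_* x = ℓ < u x`, then for small `ρ` the function `u` is essentially bounded
below on `ball x ρ` by some `μ⁻ < ℓ`, while Chebyshev's inequality makes the sublevel set
`{u ≤ u x - ε}` a fraction of `ball x ρ` smaller than any prescribed `ν`. Property (D) then
lifts the essential infimum on `ball x (ρ/2)` strictly above `ℓ`, a contradiction. The almost
everywhere statement follows from the Lebesgue differentiation theorem.
-/

open MeasureTheory Filter Set Metric Topology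
open scoped ENNReal

section Average

variable {α : Type*} [MeasurableSpace α] {μ : Measure α} {s : Set α} {f : α → ℝ}

theorem essInf_le_add_setAverage_abs_sub (hμ : μ s ≠ 0) (hμ' : μ s ≠ ∞)
    (hf : IntegrableOn f s μ) (a : ℝ) :
    essInf (fun y => (f y : EReal)) (μ.restrict s) ≤
      (((a + ⨍ y in s, |a - f y| ∂μ) : ℝ) : EReal) := by
  have := Fact.mk hμ'.lt_top
  obtain ⟨z, hz, hz_le⟩ := exists_notMem_null_le_average
    (N := {z | ¬ essInf (fun y => (f y : EReal)) (μ.restrict s) ≤ f z})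
    (Measure.restrict_eq_zero.not.2 hμ) (f := fun y => |a - f y|)
    ((integrableOn_const hμ').sub hf).abs (ae_iff.1 ae_essInf_le)
  calc essInf (fun y => (f y : EReal)) (μ.restrict s) ≤ f z := not_not.1 hz
    _ ≤ (((a + ⨍ y in s, |a - f y| ∂μ) : ℝ) : EReal) := by
        exact_mod_cast (by linarith [neg_abs_le (a - f z)] : f z ≤ a + ⨍ y in s, |a - f y| ∂μ)

theorem measure_le_ofReal_mul_of_setAverage_le (hs : MeasurableSet s) (hμ : μ s ≠ ∞)
    (hf₀ : ∀ z, 0 ≤ f z) (hf : IntegrableOn f s μ) {c ν : ℝ} (hc : 0 < c) (hν : 0 ≤ ν)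
    (havg : ⨍ z in s, f z ∂μ ≤ ν * c) :
    μ {z ∈ s | c ≤ f z} ≤ ENNReal.ofReal ν * μ s := by
  have hmarkov : c * μ.real {z ∈ s | c ≤ f z} ≤ c * (ν * μ.real s) :=
    calc c * μ.real {z ∈ s | c ≤ f z} = c * (μ.restrict s).real {z | c ≤ f z} := by
          rw [measureReal_restrict_apply' hs, inter_comm]; rfl
      _ ≤ ∫ z in s, f z ∂μ := mul_meas_ge_le_integral_of_nonneg (ae_of_all _ hf₀) hf c
      _ = μ.real s * ⨍ z in s, f z ∂μ := (measure_smul_setAverage f hμ).symm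
      _ ≤ μ.real s * (ν * c) := by gcongr
      _ = c * (ν * μ.real s) := by ring
  have hfin : μ {z ∈ s | c ≤ f z} ≠ ∞ := measure_ne_top_of_subset (sep_subset _ _) hμ
  rw [← ofReal_measureReal hfin, ← ofReal_measureReal hμ, ← ENNReal.ofReal_mul hν]
  exact ENNReal.ofReal_le_ofReal (le_of_mul_le_mul_left hmarkov hc)

end Average

section Ball

variable {X : Type*} [PseudoMetricSpace X] {x : X}

theorem eventually_nhdsGT_ball_subset {t : Set X} (ht : t ∈ 𝓝 x) :
    ∀ᶠ r in 𝓝[>] (0 : ℝ), ball x r ⊆ t := by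
  obtain ⟨ε, hε, hsub⟩ := Metric.mem_nhds_iff.1 ht
  filter_upwards [Ioo_mem_nhdsGT hε] with r hr using (ball_subset_ball hr.2.le).trans hsub

variable [MeasurableSpace X] {μ : Measure X} {u : X → ℝ} {L : EReal}

theorem MeasureTheory.LocallyIntegrableOn.eventually_integrableOn_ball {Ω : Set X}
    (hu : LocallyIntegrableOn u Ω μ) (hΩ : IsOpen Ω) (hx : x ∈ Ω) :
    ∀ᶠ r in 𝓝[>] (0 : ℝ), IntegrableOn u (ball x r) μ := by
  obtain ⟨t, ht, hut⟩ := hu x hx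
  rw [hΩ.nhdsWithin_eq hx] at ht
  filter_upwards [eventually_nhdsGT_ball_subset ht] with r hr using hut.mono_set hr

theorem ne_bot_of_tendsto_essInf_ball
    (hL : Tendsto (fun r => essInf (fun y => (u y : EReal)) (μ.restrict (ball x r)))
      (𝓝[>] 0) (𝓝 L))
    {t : Set X} (ht : t ∈ 𝓝 x) {m : ℝ} (hm : ∀ᵐ z ∂μ.restrict t, m ≤ u z) : L ≠ ⊥ := by
  refine ne_bot_of_le_ne_bot (EReal.coe_ne_bot m) (ge_of_tendsto hL ?_)
  filter_upwards [eventually_nhdsGT_ball_subset ht] with r hr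
  refine le_essInf_of_ae_le _ ?_
  filter_upwards [ae_restrict_of_ae_restrict_of_subset hr hm] with z hz
  exact EReal.coe_le_coe_iff.2 hz

variable [ProperSpace X] [IsFiniteMeasureOnCompacts μ]

theorem tendsto_essInf_ball_le [μ.IsOpenPosMeasure]
    (hint : ∀ᶠ r in 𝓝[>] (0 : ℝ), IntegrableOn u (ball x r) μ)
    (hleb : Tendsto (fun r => ⨍ y in ball x r, |u x - u y| ∂μ) (𝓝[>] 0) (𝓝 0))
    (hL : Tendsto (fun r => essInf (fun y => (u y : EReal)) (μ.restrict (ball x r)))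
      (𝓝[>] 0) (𝓝 L)) :
    L ≤ u x := by
  have hlim : Tendsto (fun r => (((u x + ⨍ y in ball x r, |u x - u y| ∂μ) : ℝ) : EReal))
      (𝓝[>] 0) (𝓝 (u x)) := by
    have h := (continuous_coe_real_ereal.tendsto _).comp (hleb.const_add (u x))
    rwa [add_zero] at h
  refine le_of_tendsto_of_tendsto hL hlim ?_
  filter_upwards [hint, self_mem_nhdsWithin] with r hr hr0
  exact essInf_le_add_setAverage_abs_sub (measure_ball_pos μ x hr0).ne'
    measure_ball_lt_top.ne hr (u x)

theorem coe_le_of_tendsto_essInf_ball [OpensMeasurableSpace X] {a : ℝ} (ha : 0 < a)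
    (hint : ∀ᶠ r in 𝓝[>] (0 : ℝ), IntegrableOn u (ball x r) μ)
    (hleb : Tendsto (fun r => ⨍ y in ball x r, |u x - u y| ∂μ) (𝓝[>] 0) (𝓝 0))
    (hL : Tendsto (fun r => essInf (fun y => (u y : EReal)) (μ.restrict (ball x r)))
      (𝓝[>] 0) (𝓝 L))
    (hLbot : L ≠ ⊥)
    (hD : ∀ M > (0 : ℝ), ∀ m : ℝ, ∃ ν > (0 : ℝ), ∀ᶠ ρ in 𝓝[>] (0 : ℝ),
      (∀ᵐ z ∂μ.restrict (ball x ρ), m ≤ u z) →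
      μ {z ∈ ball x ρ | u z ≤ m + M} ≤ ENNReal.ofReal ν * μ (ball x ρ) →
      ∀ᵐ z ∂μ.restrict (ball x (ρ / 2)), m + a * M ≤ u z) :
    (u x : EReal) ≤ L := by
  by_contra! hlt
  lift L to ℝ using ⟨(hlt.trans_le le_top).ne, hLbot⟩
  rw [EReal.coe_lt_coe_iff] at hlt
  set M := u x - L
  set ε := a * M / 2 with hε
  have hε0 : 0 < ε := by positivity
  obtain ⟨ν, hν, hνD⟩ := hD M (by linarith) (L - ε)
  have hbelow : ∀ᶠ ρ in 𝓝[>] (0 : ℝ), ∀ᵐ z ∂μ.restrict (ball x ρ), L - ε ≤ u z := by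
    filter_upwards [hL.eventually (eventually_gt_nhds (EReal.coe_lt_coe_iff.2
      (sub_lt_self L hε0)))] with ρ hρ
    filter_upwards [ae_lt_of_lt_essInf hρ] with z hz using (EReal.coe_lt_coe_iff.1 hz).le
  -- Chebyshev: `u ≤ L - ε + M = u x - ε` forces `|u x - u| ≥ ε`, rare at a Lebesgue point.
  have hsmall : ∀ᶠ ρ in 𝓝[>] (0 : ℝ),
      μ {z ∈ ball x ρ | u z ≤ L - ε + M} ≤ ENNReal.ofReal ν * μ (ball x ρ) := by
    filter_upwards [hint, hleb.eventually (eventually_lt_nhds (mul_pos hν hε0))] with ρ hρ havg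
    calc μ {z ∈ ball x ρ | u z ≤ L - ε + M} ≤ μ {z ∈ ball x ρ | ε ≤ |u x - u z|} :=
          measure_mono fun z ⟨hz, hzu⟩ => ⟨hz, le_abs.2 (Or.inl (by linarith))⟩
      _ ≤ ENNReal.ofReal ν * μ (ball x ρ) :=
          measure_le_ofReal_mul_of_setAverage_le measurableSet_ball measure_ball_lt_top.ne
            (fun _ => abs_nonneg _) ((integrableOn_const measure_ball_lt_top.ne).sub hρ).abs
            hε0 hν.le havg.le
  have habove : ∀ᶠ r in 𝓝[>] (0 : ℝ),
      ((L + ε : ℝ) : EReal) ≤ essInf (fun y => (u y : EReal)) (μ.restrict (ball x r)) := by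
    filter_upwards [eventually_nhdsGT_zero_mul_left two_pos (hνD.and (hbelow.and hsmall))]
      with r ⟨hDr, hbr, hsr⟩
    have hup := hDr hbr hsr
    rw [mul_div_cancel_left₀ r two_ne_zero] at hup
    refine le_essInf_of_ae_le _ ?_
    filter_upwards [hup] with z hz using EReal.coe_le_coe_iff.2 (by linarith)
  have := ge_of_tendsto hL habove
  rw [EReal.coe_le_coe_iff] at this
  linarith

end Ball

section LebesgueDifferentiation

variable {E : Type*} [NormedAddCommGroup E] [NormedSpace ℝ E] [FiniteDimensional ℝ E]
  [MeasurableSpace E] [BorelSpace E] (μ : Measure E) [μ.IsAddHaarMeasure]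

theorem MeasureTheory.Measure.restrict_ball_eq_restrict_closedBall (x : E) {r : ℝ}
    (hr : r ≠ 0) : μ.restrict (ball x r) = μ.restrict (closedBall x r) := by
  refine Measure.restrict_congr_set (ae_eq_set.2 ⟨?_, ?_⟩)
  · rw [sdiff_eq_empty.2 ball_subset_closedBall, measure_empty]
  · rw [closedBall_sdiff_ball]
    exact Measure.addHaar_sphere_of_ne_zero μ x hr

theorem ae_tendsto_setAverage_ball_abs_sub {v : E → ℝ} (hv : LocallyIntegrable v μ) :
    ∀ᵐ x ∂μ, Tendsto (fun r => ⨍ y in ball x r, |v x - v y| ∂μ) (𝓝[>] 0) (𝓝 0) := by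
  filter_upwards [IsUnifLocDoublingMeasure.ae_tendsto_average_norm_sub (μ := μ) hv 1] with x hx
  have hclosed := hx (fun _ => x) id tendsto_id (by
    filter_upwards [self_mem_nhdsWithin] with r hr
    simpa using (Set.mem_Ioi.1 hr).le)
  refine hclosed.congr' ?_
  filter_upwards [self_mem_nhdsWithin] with r hr
  rw [id, ← Measure.restrict_ball_eq_restrict_closedBall μ x (ne_of_gt hr)]
  congr 1 with y
  rw [Real.norm_eq_abs, abs_sub_comm]

theorem ae_restrict_tendsto_setAverage_ball_abs_sub {u : E → ℝ} {Ω : Set E} (hΩ : IsOpen Ω)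
    (hu : LocallyIntegrableOn u Ω μ) :
    ∀ᵐ x ∂μ.restrict Ω, Tendsto (fun r => ⨍ y in ball x r, |u x - u y| ∂μ) (𝓝[>] 0) (𝓝 0) := by
  obtain ⟨U, hUo, hΩU, hU⟩ := hu.exists_nat_integrableOn
  have hV : ∀ n, IsOpen (U n ∩ Ω) := fun n => (hUo n).inter hΩ
  have hlebV : ∀ n, ∀ᵐ x ∂μ, Tendsto (fun r => ⨍ y in ball x r,
      |(U n ∩ Ω).indicator u x - (U n ∩ Ω).indicator u y| ∂μ) (𝓝[>] 0) (𝓝 0) := fun n =>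
    ae_tendsto_setAverage_ball_abs_sub μ
      ((integrable_indicator_iff (hV n).measurableSet).2 (hU n)).locallyIntegrable
  filter_upwards [ae_restrict_mem hΩ.measurableSet, ae_restrict_of_ae (ae_all_iff.2 hlebV)]
    with x hxΩ hx
  obtain ⟨n, hn⟩ := mem_iUnion.1 (hΩU hxΩ)
  have hxV : x ∈ U n ∩ Ω := ⟨hn, hxΩ⟩
  refine (hx n).congr' ?_
  filter_upwards [eventually_nhdsGT_ball_subset ((hV n).mem_nhds hxV)] with r hr
  refine setAverage_congr_fun measurableSet_ball (ae_of_all _ fun y hy => ?_)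
  rw [indicator_of_mem hxV, indicator_of_mem (hr hy)]

end LebesgueDifferentiation

/-- If a locally integrable, locally essentially bounded below
function `u` satisfies the De Giorgi property (D) — for all `a ∈ (0,1)`,
`M > 0`, `μ⁻ ≤ essinf u` there is `ν ∈ (0,1)` independent of the cube such
that smallness of the sublevel set `{u ≤ μ⁻ + M}` in measure forces
`u ≥ μ⁻ + aM` a.e. on the half cube — then `u = u_*` at every Lebesgue point,
and `u_*` is a (lower semicontinuous) representative of `u`, i.e. `u = u_*` a.e. -/
theorem stmt2 {d : ℕ} (Ω : Set (Fin d → ℝ)) (hΩ : IsOpen Ω)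
    (u : (Fin d → ℝ) → ℝ) (hu : LocallyIntegrableOn u Ω volume)
    (hbd : ∀ K ⊆ Ω, IsCompact K → ∃ m : ℝ, ∀ᵐ y ∂(volume.restrict K), m ≤ u y)
    (hD : ∀ a ∈ Ioo (0:ℝ) 1, ∀ M > (0:ℝ), ∀ μm : ℝ, ∃ ν ∈ Ioo (0:ℝ) 1,
      ∀ (y : Fin d → ℝ) (ρ : ℝ), 0 < ρ → ball y ρ ⊆ Ω →
        (∀ᵐ z ∂(volume.restrict (ball y ρ)), μm ≤ u z) →
        volume {z ∈ ball y ρ | u z ≤ μm + M} ≤ ENNReal.ofReal ν * volume (ball y ρ) →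
        ∀ᵐ z ∂(volume.restrict (ball y (ρ/2))), μm + a * M ≤ u z)
    (ustar : (Fin d → ℝ) → EReal)
    (hstar : ∀ x ∈ Ω, Tendsto (fun r : ℝ =>
        essInf (fun y => (u y : EReal)) (volume.restrict (ball x r)))
      (𝓝[>] 0) (𝓝 (ustar x))) :
    (∀ x ∈ Ω,
        Tendsto (fun r : ℝ => ⨍ y in ball x r, |u x - u y|) (𝓝[>] 0) (𝓝 0) →
        ustar x = (u x : EReal)) ∧
      (∀ᵐ x ∂(volume.restrict Ω), (u x : EReal) = ustar x) := by
  have hlebesgue : ∀ x ∈ Ω,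
      Tendsto (fun r : ℝ => ⨍ y in ball x r, |u x - u y|) (𝓝[>] 0) (𝓝 0) →
      ustar x = (u x : EReal) := by
    intro x hx hleb
    have hΩx : Ω ∈ 𝓝 x := hΩ.mem_nhds hx
    have hint := hu.eventually_integrableOn_ball hΩ hx
    obtain ⟨R, hR, hRΩ⟩ := nhds_basis_closedBall.mem_iff.1 hΩx
    obtain ⟨m, hm⟩ := hbd _ hRΩ (isCompact_closedBall x R)
    refine le_antisymm (tendsto_essInf_ball_le hint hleb (hstar x hx))
      (coe_le_of_tendsto_essInf_ball one_half_pos hint hleb (hstar x hx)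
        (ne_bot_of_tendsto_essInf_ball (hstar x hx) (closedBall_mem_nhds x hR) hm) ?_)
    intro M hM μm
    obtain ⟨ν, hν, hνD⟩ := hD (1 / 2) ⟨one_half_pos, one_half_lt_one⟩ M hM μm
    refine ⟨ν, hν.1, ?_⟩
    filter_upwards [self_mem_nhdsWithin, eventually_nhdsGT_ball_subset hΩx] with ρ hρ hρΩ
    exact hνD x ρ hρ hρΩ
  refine ⟨hlebesgue, ?_⟩
  filter_upwards [ae_restrict_mem hΩ.measurableSet,
    ae_restrict_tendsto_setAverage_ball_abs_sub volume hΩ hu] with x hx hleb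
  exact (hlebesgue x hx hleb).symm
end

section
/- Let $u$ be measurable and locally essentially bounded on an open set $\Omega_T\subseteq\mathbb{R}^{N+1}$, and suppose both $u$ and $-u$ satisfy the De Giorgi property (D) (with parabolic cylinders $Q_\rho = K_\rho\times(-\rho^p,\rho^p)$). Then $u$ has a representative $\tilde u$ such that the lower regularization $u_*$ is lower semicontinuous, the upper regularization $u^* := -(-u)_*$ is upper semicontinuous, $u_* \le u^*$ everywhere, and $u_* = u = u^*$ at every Lebesgue point of $u$; in particular $u_*=u^*$ a.e. -/
/-!
Fix a Lebesgue point `z` of `u` and `t < u z`. Near `z`, `u` is essentially bounded below by some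
`m`, and by Chebyshev's inequality the sublevel set `{u ≤ (t + u z) / 2}` fills only a small
fraction of small cylinders around `z`; property (D) then raises the essential lower bound to `t`
on a shrunken cylinder. Hence `u z ≤ u_* z`; the same argument for `-u` gives `u^* z ≤ u z`, and
`u_* ≤ u^*` closes the sandwich. Semicontinuity holds because a cylinder around a nearby point
fits into a cylinder around `z`. Almost every point is a Lebesgue point for parabolic cylinders
since these are the balls of the metric `max (dist x y) (|t - s| ^ p⁻¹)`, for which Lebesgue
measure is doubling, so the Lebesgue differentiation theorem applies.
-/

open MeasureTheory Filter Set Metric Topology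

open scoped ENNReal

section Regularization

variable {X α β : Type*} [TopologicalSpace X] [MeasurableSpace α] {μ : Measure α}
  [CompleteLinearOrder β] {f : α → β}

theorem essInf_le_essSup_of_ne_zero (hμ : μ ≠ 0) : essInf f μ ≤ essSup f μ :=
  haveI := ae_neBot.2 hμ
  liminf_le_limsup

variable [TopologicalSpace β] [OrderTopology β]

theorem essInf_restrict_le_of_tendsto {Q : ℝ → Set α} (hQ : Monotone Q) {l : β}
    (hl : Tendsto (fun r => essInf f (μ.restrict (Q r))) (𝓝[>] 0) (𝓝 l)) {r : ℝ} (hr : 0 < r) :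
    essInf f (μ.restrict (Q r)) ≤ l := by
  refine ge_of_tendsto hl ?_
  filter_upwards [Ioc_mem_nhdsGT hr] with s hs
  exact essInf_antitone_measure (Measure.restrict_mono (hQ hs.2) le_rfl).absolutelyContinuous

theorem le_essSup_restrict_of_tendsto {Q : ℝ → Set α} (hQ : Monotone Q) {l : β}
    (hl : Tendsto (fun r => essSup f (μ.restrict (Q r))) (𝓝[>] 0) (𝓝 l)) {r : ℝ} (hr : 0 < r) :
    l ≤ essSup f (μ.restrict (Q r)) :=
  essInf_restrict_le_of_tendsto (β := βᵒᵈ) hQ hl hr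

theorem lowerSemicontinuousOn_of_tendsto_essInf {Q : X → ℝ → Set α} (hQ : ∀ z, Monotone (Q z))
    (hQ_nhds : ∀ z, ∀ r > 0, ∀ᶠ z' in 𝓝 z, ∃ s > 0, Q z' s ⊆ Q z r) {g : X → β} {S : Set X}
    (hg : ∀ z ∈ S, Tendsto (fun r => essInf f (μ.restrict (Q z r))) (𝓝[>] 0) (𝓝 (g z))) :
    LowerSemicontinuousOn g S := by
  intro z hz y hy
  obtain ⟨r, hyr, hr⟩ := (((hg z hz).eventually_const_lt hy).and self_mem_nhdsWithin).exists
  filter_upwards [nhdsWithin_le_nhds (hQ_nhds z r hr), self_mem_nhdsWithin]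
    with z' ⟨s, hs, hsr⟩ hz'
  calc y < essInf f (μ.restrict (Q z r)) := hyr
    _ ≤ essInf f (μ.restrict (Q z' s)) :=
      essInf_antitone_measure (Measure.restrict_mono hsr le_rfl).absolutelyContinuous
    _ ≤ g z' := essInf_restrict_le_of_tendsto (hQ z') (hg z' hz') hs

theorem upperSemicontinuousOn_of_tendsto_essSup {Q : X → ℝ → Set α} (hQ : ∀ z, Monotone (Q z))
    (hQ_nhds : ∀ z, ∀ r > 0, ∀ᶠ z' in 𝓝 z, ∃ s > 0, Q z' s ⊆ Q z r) {g : X → β} {S : Set X}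
    (hg : ∀ z ∈ S, Tendsto (fun r => essSup f (μ.restrict (Q z r))) (𝓝[>] 0) (𝓝 (g z))) :
    UpperSemicontinuousOn g S :=
  lowerSemicontinuousOn_of_tendsto_essInf (β := βᵒᵈ) hQ hQ_nhds hg

theorem le_of_tendsto_essInf_of_tendsto_essSup {Q : ℝ → Set α} (hQ : ∀ r > 0, μ (Q r) ≠ 0)
    {l₁ l₂ : β} (h₁ : Tendsto (fun r => essInf f (μ.restrict (Q r))) (𝓝[>] 0) (𝓝 l₁))
    (h₂ : Tendsto (fun r => essSup f (μ.restrict (Q r))) (𝓝[>] 0) (𝓝 l₂)) : l₁ ≤ l₂ := by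
  refine le_of_tendsto_of_tendsto h₁ h₂ ?_
  filter_upwards [self_mem_nhdsWithin] with r hr
  exact essInf_le_essSup_of_ne_zero (by simpa using hQ r hr)

theorem EReal.coe_le_of_tendsto_essInf {Q : ℝ → Set α} (hQ : Monotone Q) {v : α → ℝ} {l : EReal}
    (hl : Tendsto (fun r => essInf (fun w => (v w : EReal)) (μ.restrict (Q r))) (𝓝[>] 0) (𝓝 l))
    {x : ℝ} (hx : ∀ t < x, ∃ ρ > 0, ∀ᵐ w ∂μ.restrict (Q ρ), t ≤ v w) : (x : EReal) ≤ l := by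
  refine EReal.ge_of_forall_gt_iff_ge.1 fun t ht => ?_
  obtain ⟨ρ, hρ, hae⟩ := hx t (EReal.coe_lt_coe_iff.1 ht)
  exact (le_essInf_of_ae_le _ (hae.mono fun w hw => EReal.coe_le_coe_iff.2 hw)).trans
    (essInf_restrict_le_of_tendsto hQ hl hρ)

theorem EReal.le_coe_of_tendsto_essSup {Q : ℝ → Set α} (hQ : Monotone Q) {v : α → ℝ} {l : EReal}
    (hl : Tendsto (fun r => essSup (fun w => (v w : EReal)) (μ.restrict (Q r))) (𝓝[>] 0) (𝓝 l))
    {x : ℝ} (hx : ∀ t > x, ∃ ρ > 0, ∀ᵐ w ∂μ.restrict (Q ρ), v w ≤ t) : l ≤ (x : EReal) := by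
  refine EReal.le_of_forall_lt_iff_le.1 fun t ht => ?_
  obtain ⟨ρ, hρ, hae⟩ := hx t (EReal.coe_lt_coe_iff.1 ht)
  exact (le_essSup_restrict_of_tendsto hQ hl hρ).trans
    (essSup_le_of_ae_le _ (hae.mono fun w hw => EReal.coe_le_coe_iff.2 hw))

end Regularization

theorem measure_setOf_le_le_of_setAverage_le {α : Type*} [MeasurableSpace α] {μ : Measure α}
    {s : Set α} (hs : μ s ≠ ∞) {g : α → ℝ} (hg : IntegrableOn g s μ) (hg₀ : ∀ x, 0 ≤ g x)
    {δ ν : ℝ} (hδ : 0 < δ) (hν : 0 ≤ ν) (h : ⨍ x in s, g x ∂μ ≤ δ * ν) :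
    μ {x ∈ s | δ ≤ g x} ≤ ENNReal.ofReal ν * μ s := by
  have hmarkov : (μ.restrict s).real {x | δ ≤ g x} ≤ ν * μ.real s := by
    refine le_of_mul_le_mul_left ?_ hδ
    calc δ * (μ.restrict s).real {x | δ ≤ g x} ≤ ∫ x in s, g x ∂μ :=
          mul_meas_ge_le_integral_of_nonneg (Eventually.of_forall hg₀) hg δ
      _ = μ.real s * ⨍ x in s, g x ∂μ := (measure_smul_setAverage g hs).symm
      _ ≤ μ.real s * (δ * ν) := by gcongr
      _ = δ * (ν * μ.real s) := by ring
  have hfin : μ.restrict s {x | δ ≤ g x} ≠ ∞ :=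
    ((measure_mono (subset_univ _)).trans_eq (Measure.restrict_apply_univ s)).trans_lt
      hs.lt_top |>.ne
  calc μ {x ∈ s | δ ≤ g x} ≤ μ.restrict s {x | δ ≤ g x} :=
        (measure_mono (inter_comm s {x | δ ≤ g x}).subset).trans (Measure.le_restrict_apply _ _)
    _ = ENNReal.ofReal ((μ.restrict s).real {x | δ ≤ g x}) := (ofReal_measureReal hfin).symm
    _ ≤ ENNReal.ofReal (ν * μ.real s) := ENNReal.ofReal_le_ofReal hmarkov
    _ = ENNReal.ofReal ν * μ s := by rw [ENNReal.ofReal_mul hν, ofReal_measureReal hs]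

section ParabolicCylinder

variable {E : Type*} [PseudoMetricSpace E] {p : ℝ}

def parabolicCylinder (p : ℝ) (z : E × ℝ) (r : ℝ) : Set (E × ℝ) :=
  ball z.1 r ×ˢ Ioo (z.2 - r ^ p) (z.2 + r ^ p)

def closedParabolicCylinder (p : ℝ) (z : E × ℝ) (r : ℝ) : Set (E × ℝ) :=
  closedBall z.1 r ×ˢ Icc (z.2 - r ^ p) (z.2 + r ^ p)

theorem mem_parabolicCylinder {z w : E × ℝ} {r : ℝ} :
    w ∈ parabolicCylinder p z r ↔ dist w.1 z.1 < r ∧ |w.2 - z.2| < r ^ p := by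
  simp only [parabolicCylinder, mem_prod, mem_ball, mem_Ioo, abs_sub_lt_iff]
  constructor <;> rintro ⟨h₁, h₂, h₃⟩ <;> exact ⟨h₁, by linarith, by linarith⟩

theorem mem_closedParabolicCylinder {z w : E × ℝ} {r : ℝ} :
    w ∈ closedParabolicCylinder p z r ↔ dist w.1 z.1 ≤ r ∧ |w.2 - z.2| ≤ r ^ p := by
  simp only [closedParabolicCylinder, mem_prod, mem_closedBall, mem_Icc, abs_sub_le_iff]
  constructor <;> rintro ⟨h₁, h₂, h₃⟩ <;> exact ⟨h₁, by linarith, by linarith⟩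

theorem parabolicCylinder_mono (hp : 0 ≤ p) (z : E × ℝ) : Monotone (parabolicCylinder p z) := by
  intro r s hrs w hw
  rw [mem_parabolicCylinder] at hw ⊢
  have hr : 0 ≤ r := dist_nonneg.trans hw.1.le
  exact ⟨hw.1.trans_le hrs, hw.2.trans_le (Real.rpow_le_rpow hr hrs hp)⟩

theorem parabolicCylinder_subset_closedParabolicCylinder (z : E × ℝ) (r : ℝ) :
    parabolicCylinder p z r ⊆ closedParabolicCylinder p z r :=
  prod_mono ball_subset_closedBall Ioo_subset_Icc_self

theorem closedParabolicCylinder_subset_parabolicCylinder (hp : 0 < p) (z : E × ℝ) {r s : ℝ}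
    (hr : 0 ≤ r) (hrs : r < s) :
    closedParabolicCylinder p z r ⊆ parabolicCylinder p z s := by
  have := Real.rpow_lt_rpow hr hrs hp
  exact prod_mono (closedBall_subset_ball hrs) (Icc_subset_Ioo (by linarith) (by linarith))

theorem parabolicCylinder_subset_parabolicCylinder {z z' : E × ℝ} {r s : ℝ}
    (h₁ : dist z'.1 z.1 + s ≤ r) (h₂ : |z'.2 - z.2| + s ^ p ≤ r ^ p) :
    parabolicCylinder p z' s ⊆ parabolicCylinder p z r := by
  intro w hw
  rw [mem_parabolicCylinder] at hw ⊢
  constructor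
  · linarith [dist_triangle w.1 z'.1 z.1]
  · linarith [abs_sub_le w.2 z'.2 z.2]

theorem eventually_exists_parabolicCylinder_subset (hp : 0 < p) (z : E × ℝ) (r : ℝ) (hr : 0 < r) :
    ∀ᶠ z' in 𝓝 z, ∃ s > 0, parabolicCylinder p z' s ⊆ parabolicCylinder p z r := by
  have hη : (r / 2) ^ p < r ^ p := Real.rpow_lt_rpow (by positivity) (half_lt_self hr) hp
  filter_upwards [prod_mem_nhds (ball_mem_nhds z.1 (half_pos hr))
    (ball_mem_nhds z.2 (sub_pos.2 hη))] with z' ⟨h₁, h₂⟩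
  rw [mem_ball] at h₁ h₂
  rw [Real.dist_eq] at h₂
  exact ⟨r / 2, half_pos hr, parabolicCylinder_subset_parabolicCylinder (by linarith) (by linarith)⟩

theorem hasBasis_nhds_parabolicCylinder (hp : 0 < p) (z : E × ℝ) :
    (𝓝 z).HasBasis (fun r : ℝ => 0 < r) (parabolicCylinder p z) := by
  refine ((nhds_basis_ball (x := z.1)).prod_nhds (nhds_basis_ball (x := z.2))).to_hasBasis ?_ ?_
  · rintro ⟨ε₁, ε₂⟩ ⟨hε₁, hε₂⟩
    have hr : 0 < min ε₁ (ε₂ ^ p⁻¹) := lt_min hε₁ (Real.rpow_pos_of_pos hε₂ _)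
    have hrp : (min ε₁ (ε₂ ^ p⁻¹)) ^ p ≤ ε₂ :=
      (Real.le_rpow_inv_iff_of_pos hr.le hε₂.le hp).1 (min_le_right _ _)
    refine ⟨_, hr, prod_mono (ball_subset_ball (min_le_left _ _)) ?_⟩
    rw [Real.ball_eq_Ioo]
    exact Ioo_subset_Ioo (by linarith) (by linarith)
  · intro r hr
    exact ⟨(r, r ^ p), ⟨hr, Real.rpow_pos_of_pos hr p⟩, by
      rw [Real.ball_eq_Ioo]; exact Subset.rfl⟩

end ParabolicCylinder

section ParabolicDist

variable {E : Type*} [PseudoMetricSpace E] {p : ℝ}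

noncomputable def parabolicDist (p : ℝ) (z w : E × ℝ) : ℝ :=
  max (dist z.1 w.1) (|z.2 - w.2| ^ p⁻¹)

theorem parabolicDist_self (hp : 0 < p) (z : E × ℝ) : parabolicDist p z z = 0 := by
  simp [parabolicDist, Real.zero_rpow (inv_ne_zero hp.ne')]

theorem parabolicDist_comm (z w : E × ℝ) : parabolicDist p z w = parabolicDist p w z := by
  rw [parabolicDist, parabolicDist, dist_comm, abs_sub_comm]

theorem parabolicDist_triangle (hp : 1 ≤ p) (x y z : E × ℝ) :
    parabolicDist p x z ≤ parabolicDist p x y + parabolicDist p y z := by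
  have hp₀ : 0 ≤ p⁻¹ := inv_nonneg.2 (zero_le_one.trans hp)
  refine max_le ((dist_triangle x.1 y.1 z.1).trans (add_le_add (le_max_left _ _)
    (le_max_left _ _))) ?_
  calc |x.2 - z.2| ^ p⁻¹ ≤ (|x.2 - y.2| + |y.2 - z.2|) ^ p⁻¹ :=
        Real.rpow_le_rpow (abs_nonneg _) (abs_sub_le _ _ _) hp₀
    _ ≤ |x.2 - y.2| ^ p⁻¹ + |y.2 - z.2| ^ p⁻¹ :=
        Real.rpow_add_le_add_rpow (abs_nonneg _) (abs_nonneg _) hp₀ (inv_le_one_of_one_le₀ hp)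
    _ ≤ parabolicDist p x y + parabolicDist p y z :=
        add_le_add (le_max_right _ _) (le_max_right _ _)

theorem parabolicDist_lt_iff (hp : 0 < p) {z w : E × ℝ} {r : ℝ} (hr : 0 ≤ r) :
    parabolicDist p z w < r ↔ w ∈ parabolicCylinder p z r := by
  rw [parabolicDist, max_lt_iff, mem_parabolicCylinder, dist_comm, abs_sub_comm,
    Real.rpow_inv_lt_iff_of_pos (abs_nonneg _) hr hp]

theorem parabolicDist_le_iff (hp : 0 < p) {z w : E × ℝ} {r : ℝ} (hr : 0 ≤ r) :
    parabolicDist p z w ≤ r ↔ w ∈ closedParabolicCylinder p z r := by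
  rw [parabolicDist, max_le_iff, mem_closedParabolicCylinder, dist_comm, abs_sub_comm,
    Real.rpow_inv_le_iff_of_pos (abs_nonneg _) hr hp]

theorem isOpen_iff_parabolicDist (hp : 0 < p) (S : Set (E × ℝ)) :
    IsOpen S ↔ ∀ z ∈ S, ∃ ε > 0, ∀ w, parabolicDist p z w < ε → w ∈ S := by
  simp only [isOpen_iff_mem_nhds, (hasBasis_nhds_parabolicCylinder hp _).mem_iff]
  refine forall₂_congr fun z _ => exists_congr fun ε => and_congr_right fun hε => ?_
  simp only [parabolicDist_lt_iff hp hε.le]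
  rfl

/-- Built on the existing topology of `E × ℝ`, which the parabolic distance induces. -/
noncomputable abbrev parabolicPseudoMetricSpace (hp : 1 ≤ p) : PseudoMetricSpace (E × ℝ) :=
  PseudoMetricSpace.ofDistTopology (parabolicDist p) (parabolicDist_self (by linarith))
    parabolicDist_comm (parabolicDist_triangle hp) (isOpen_iff_parabolicDist (by linarith))

end ParabolicDist

section Volume

variable {E : Type*} [PseudoMetricSpace E] [MeasureSpace E] {p : ℝ}

theorem volume_closedParabolicCylinder (z : E × ℝ) (r : ℝ) :
    volume (closedParabolicCylinder p z r) =
      volume (closedBall z.1 r) * ENNReal.ofReal (2 * r ^ p) := by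
  rw [closedParabolicCylinder, Measure.volume_eq_prod, Measure.prod_prod, Real.volume_Icc]
  ring_nf

theorem volume_parabolicCylinder_pos [(volume : Measure E).IsOpenPosMeasure] (z : E × ℝ) {r : ℝ}
    (hr : 0 < r) : 0 < volume (parabolicCylinder p z r) := by
  rw [parabolicCylinder, Measure.volume_eq_prod, Measure.prod_prod, Real.volume_Ioo]
  exact ENNReal.mul_pos (measure_ball_pos volume z.1 hr).ne'
    (by simpa using Real.rpow_pos_of_pos hr p)

theorem volume_parabolicCylinder_lt_top [ProperSpace E]
    [IsFiniteMeasureOnCompacts (volume : Measure E)] (z : E × ℝ) (r : ℝ) :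
    volume (parabolicCylinder p z r) < ∞ := by
  rw [parabolicCylinder, Measure.volume_eq_prod, Measure.prod_prod, Real.volume_Ioo]
  exact ENNReal.mul_lt_top measure_ball_lt_top ENNReal.ofReal_lt_top

end Volume

theorem VitaliFamily.ae_tendsto_average_norm_sub_of_locallyIntegrableOn {α F : Type*}
    [PseudoMetricSpace α] [MeasurableSpace α] [SecondCountableTopology α] [BorelSpace α]
    {μ : Measure α} [IsLocallyFiniteMeasure μ] (v : VitaliFamily μ) [NormedAddCommGroup F]
    {f : α → F} {s : Set α} (hs : IsOpen s) (hf : LocallyIntegrableOn f s μ) :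
    ∀ᵐ x ∂μ.restrict s, Tendsto (fun a => ⨍ y in a, ‖f y - f x‖ ∂μ) (v.filterAt x) (𝓝 0) := by
  obtain ⟨T, hTc, hTo, hsT, hTi⟩ := hf.exists_countable_integrableOn
  have hT : ∀ᵐ x ∂μ, ∀ t ∈ T, Tendsto (fun a => ⨍ y in a,
      ‖(t ∩ s).indicator f y - (t ∩ s).indicator f x‖ ∂μ) (v.filterAt x) (𝓝 0) :=
    (ae_ball_iff hTc).2 fun t ht => v.ae_tendsto_average_norm_sub
      ((hTi t ht).integrable_indicator ((hTo t ht).inter hs).measurableSet).locallyIntegrable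
  filter_upwards [ae_restrict_of_ae hT, ae_restrict_mem hs.measurableSet] with x hx hxs
  obtain ⟨t, ht, hxt⟩ := mem_iUnion₂.1 (hsT hxs)
  refine (hx t ht).congr' ?_
  filter_upwards [v.eventually_filterAt_subset_of_nhds (((hTo t ht).inter hs).mem_nhds ⟨hxt, hxs⟩),
    v.eventually_filterAt_measurableSet x] with a hat ha
  refine setAverage_congr_fun ha (Eventually.of_forall fun y hy => ?_)
  rw [indicator_of_mem (hat hy), indicator_of_mem (show x ∈ t ∩ s from ⟨hxt, hxs⟩)]

section AddHaar

variable {E : Type*} [NormedAddCommGroup E] [NormedSpace ℝ E] [FiniteDimensional ℝ E]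
  [MeasureSpace E] [BorelSpace E] [(volume : Measure E).IsAddHaarMeasure] {p : ℝ}

theorem volume_closedParabolicCylinder_mul (z : E × ℝ) {a r : ℝ} (ha : 0 ≤ a) (hr : 0 ≤ r) :
    volume (closedParabolicCylinder p z (a * r)) =
      ENNReal.ofReal (a ^ Module.finrank ℝ E * a ^ p) * volume (closedParabolicCylinder p z r) := by
  rw [volume_closedParabolicCylinder, volume_closedParabolicCylinder,
    Measure.addHaar_closedBall_mul volume z.1 ha hr, ← Measure.addHaar_closedBall_center volume z.1,
    Real.mul_rpow ha hr, show 2 * (a ^ p * r ^ p) = a ^ p * (2 * r ^ p) by ring,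
    ENNReal.ofReal_mul (pow_nonneg ha _), ENNReal.ofReal_mul (Real.rpow_nonneg ha p)]
  ring

theorem parabolicCylinder_ae_eq_closedParabolicCylinder (z : E × ℝ) {r : ℝ} (hr : 0 < r) :
    parabolicCylinder p z r =ᵐ[volume] closedParabolicCylinder p z r := by
  have hball : ball z.1 r =ᵐ[volume] closedBall z.1 r :=
    ae_eq_of_subset_of_measure_ge ball_subset_closedBall
      (by rw [Measure.addHaar_closedBall volume z.1 hr.le,
        Measure.addHaar_ball_of_pos volume z.1 hr])
      measurableSet_ball.nullMeasurableSet measure_closedBall_lt_top.ne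
  rw [Measure.volume_eq_prod]
  exact Measure.set_prod_ae_eq hball Ioo_ae_eq_Icc

theorem ae_tendsto_average_abs_sub_parabolicCylinder (hp : 1 ≤ p) {Ω : Set (E × ℝ)}
    (hΩ : IsOpen Ω) {f : E × ℝ → ℝ} (hf : LocallyIntegrableOn f Ω) :
    ∀ᵐ z ∂volume.restrict Ω,
      Tendsto (fun r => ⨍ w in parabolicCylinder p z r, |f z - f w|) (𝓝[>] 0) (𝓝 0) := by
  have hp₀ : 0 < p := zero_lt_one.trans_le hp
  let := parabolicPseudoMetricSpace (E := E) hp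
  have hball : ∀ z : E × ℝ, ∀ r ≥ 0, closedBall z r = closedParabolicCylinder p z r :=
    fun z r hr => ext fun w => mem_closedBall'.trans (parabolicDist_le_iff hp₀ hr)
  have : IsUnifLocDoublingMeasure (volume : Measure (E × ℝ)) := by
    refine ⟨(2 ^ Module.finrank ℝ E * 2 ^ p : ℝ).toNNReal, ?_⟩
    filter_upwards [self_mem_nhdsWithin] with r (hr : 0 < r) z
    rw [hball z _ (by positivity), hball z r hr.le,
      volume_closedParabolicCylinder_mul z zero_le_two hr.le, ENNReal.ofReal]
  filter_upwards [(IsUnifLocDoublingMeasure.vitaliFamily volume 1)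
    |>.ae_tendsto_average_norm_sub_of_locallyIntegrableOn hΩ hf] with z hz
  refine (hz.comp (IsUnifLocDoublingMeasure.tendsto_closedBall_filterAt volume (fun _ => z) id
    tendsto_id (eventually_mem_nhdsWithin.mono fun r (hr : 0 < r) =>
      mem_closedBall_self (by simpa using hr.le)))).congr' ?_
  filter_upwards [self_mem_nhdsWithin] with r (hr : 0 < r)
  show ⨍ w in closedBall z r, ‖f w - f z‖ = ⨍ w in parabolicCylinder p z r, |f z - f w|
  rw [hball z r hr.le, ← setAverage_congr (parabolicCylinder_ae_eq_closedParabolicCylinder z hr)]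
  simp_rw [Real.norm_eq_abs, abs_sub_comm (f _) (f z)]

end AddHaar

section DeGiorgi

variable {E : Type*} [PseudoMetricSpace E] [MeasureSpace E] {p c : ℝ}
  {Ω : Set (E × ℝ)} {v : E × ℝ → ℝ}

def HasDeGiorgiProperty (Ω : Set (E × ℝ)) (p c : ℝ) (v : E × ℝ → ℝ) : Prop :=
  ∀ a ∈ Ioo (0 : ℝ) 1, ∀ M > (0 : ℝ), ∀ m : ℝ, ∃ ν ∈ Ioo (0 : ℝ) 1,
    ∀ (z : E × ℝ) (ρ : ℝ), 0 < ρ → parabolicCylinder p z ρ ⊆ Ω →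
      (∀ᵐ w ∂volume.restrict (parabolicCylinder p z ρ), m ≤ v w) →
      volume {w ∈ parabolicCylinder p z ρ | v w ≤ m + M} ≤
        ENNReal.ofReal ν * volume (parabolicCylinder p z ρ) →
      ∀ᵐ w ∂volume.restrict (parabolicCylinder p z (c * ρ)), m + a * M ≤ v w

theorem HasDeGiorgiProperty.exists_ae_ge_of_lt [ProperSpace E]
    [IsFiniteMeasureOnCompacts (volume : Measure E)] (hD : HasDeGiorgiProperty Ω p c v) (hp : 0 ≤ p)
    (hc : 0 < c) {z : E × ℝ} {r₀ m : ℝ} (hr₀ : 0 < r₀) (hΩ : parabolicCylinder p z r₀ ⊆ Ω)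
    (hint : IntegrableOn v (parabolicCylinder p z r₀))
    (hm : ∀ᵐ w ∂volume.restrict (parabolicCylinder p z r₀), m ≤ v w)
    (hz : Tendsto (fun r => ⨍ w in parabolicCylinder p z r, |v z - v w|) (𝓝[>] 0) (𝓝 0))
    {t : ℝ} (ht : t < v z) :
    ∃ ρ > 0, ∀ᵐ w ∂volume.restrict (parabolicCylinder p z ρ), t ≤ v w := by
  rcases le_or_gt t m with htm | hmt
  · exact ⟨r₀, hr₀, hm.mono fun w hw => htm.trans hw⟩
  -- `m + M` lies midway between `t` and `v z`, and the fraction `a` is chosen so that `m + a M = t`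
  set M := (v z + t) / 2 - m with hM_def
  set δ := (v z - t) / 2 with hδ_def
  have hM : 0 < M := by linarith
  have hδ : 0 < δ := by linarith
  obtain ⟨ν, hν, hDν⟩ := hD ((t - m) / M)
    ⟨div_pos (by linarith) hM, (div_lt_one hM).2 (by linarith)⟩ M hM m
  have hIoc : ∀ᶠ r in 𝓝[>] 0, r ∈ Ioc 0 r₀ := Ioc_mem_nhdsGT hr₀
  obtain ⟨ρ, ⟨hρ, hρr₀⟩, hρ_avg⟩ :=
    (hIoc.and (hz.eventually_lt_const (mul_pos hδ hν.1))).exists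
  have hρ_sub : parabolicCylinder p z ρ ⊆ parabolicCylinder p z r₀ :=
    parabolicCylinder_mono hp z hρr₀
  have hfin := volume_parabolicCylinder_lt_top (p := p) z ρ
  have hosc : IntegrableOn (fun w => |v z - v w|) (parabolicCylinder p z ρ) :=
    ((integrableOn_const hfin.ne).sub (hint.mono_set hρ_sub)).abs
  have hlevel : volume {w ∈ parabolicCylinder p z ρ | v w ≤ m + M} ≤
      ENNReal.ofReal ν * volume (parabolicCylinder p z ρ) := by
    refine (measure_mono fun w (hw : w ∈ {w ∈ parabolicCylinder p z ρ | v w ≤ m + M}) =>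
      (⟨hw.1, ?_⟩ : w ∈ {w ∈ parabolicCylinder p z ρ | δ ≤ |v z - v w|})).trans
      (measure_setOf_le_le_of_setAverage_le hfin.ne hosc (fun w => abs_nonneg _) hδ hν.1.le
        hρ_avg.le)
    exact (by linarith [hw.2] : δ ≤ v z - v w).trans (le_abs_self _)
  refine ⟨c * ρ, mul_pos hc hρ, (hDν z ρ hρ (hρ_sub.trans hΩ)
    (ae_restrict_of_ae_restrict_of_subset hρ_sub hm) hlevel).mono fun w hw => ?_⟩
  rwa [div_mul_cancel₀ _ hM.ne', add_sub_cancel] at hw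

theorem HasDeGiorgiProperty.exists_ae_le_of_gt_of_neg [ProperSpace E]
    [IsFiniteMeasureOnCompacts (volume : Measure E)]
    (hD : HasDeGiorgiProperty Ω p c fun w => -v w) (hp : 0 ≤ p) (hc : 0 < c) {z : E × ℝ}
    {r₀ M : ℝ} (hr₀ : 0 < r₀) (hΩ : parabolicCylinder p z r₀ ⊆ Ω)
    (hint : IntegrableOn v (parabolicCylinder p z r₀))
    (hM : ∀ᵐ w ∂volume.restrict (parabolicCylinder p z r₀), v w ≤ M)
    (hz : Tendsto (fun r => ⨍ w in parabolicCylinder p z r, |v z - v w|) (𝓝[>] 0) (𝓝 0))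
    {t : ℝ} (ht : v z < t) :
    ∃ ρ > 0, ∀ᵐ w ∂volume.restrict (parabolicCylinder p z ρ), v w ≤ t := by
  have hz' : Tendsto (fun r => ⨍ w in parabolicCylinder p z r, |-v z - -v w|) (𝓝[>] 0) (𝓝 0) := by
    simpa only [neg_sub_neg, abs_sub_comm (v _) (v z)] using hz
  obtain ⟨ρ, hρ, h⟩ := hD.exists_ae_ge_of_lt hp hc hr₀ hΩ hint.neg
    (hM.mono fun _ h => neg_le_neg h) hz' (neg_lt_neg ht)
  exact ⟨ρ, hρ, h.mono fun _ => le_of_neg_le_neg⟩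

theorem exists_parabolicCylinder_integrableOn_bounded [ProperSpace E] (hp : 0 < p) (hΩ : IsOpen Ω)
    (hv : LocallyIntegrableOn v Ω)
    (hbd : ∀ K ⊆ Ω, IsCompact K → ∃ m M : ℝ, ∀ᵐ z ∂volume.restrict K, m ≤ v z ∧ v z ≤ M)
    {z : E × ℝ} (hz : z ∈ Ω) :
    ∃ r > 0, parabolicCylinder p z r ⊆ Ω ∧ IntegrableOn v (parabolicCylinder p z r) ∧
      ∃ m M : ℝ, ∀ᵐ w ∂volume.restrict (parabolicCylinder p z r), m ≤ v w ∧ v w ≤ M := by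
  obtain ⟨r, hr, hrΩ⟩ := (hasBasis_nhds_parabolicCylinder hp z).mem_iff.1 (hΩ.mem_nhds hz)
  have hK : closedParabolicCylinder p z (r / 2) ⊆ Ω :=
    (closedParabolicCylinder_subset_parabolicCylinder hp z (by positivity)
      (half_lt_self hr)).trans hrΩ
  have hKc : IsCompact (closedParabolicCylinder p z (r / 2)) :=
    (isCompact_closedBall _ _).prod isCompact_Icc
  have hsub := parabolicCylinder_subset_closedParabolicCylinder (p := p) z (r / 2)
  obtain ⟨m, M, hmM⟩ := hbd _ hK hKc
  exact ⟨r / 2, half_pos hr, hsub.trans hK,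
    (hv.integrableOn_compact_subset hK hKc).mono_set hsub, m, M,
    ae_restrict_of_ae_restrict_of_subset hsub hmM⟩

end DeGiorgi

theorem stmt17_general {N : ℕ} (ΩT : Set ((Fin N → ℝ) × ℝ)) (hΩT : IsOpen ΩT)
    (u : (Fin N → ℝ) × ℝ → ℝ)
    (huloc : LocallyIntegrableOn u ΩT volume)
    (hbd : ∀ K ⊆ ΩT, IsCompact K →
      ∃ m M : ℝ, ∀ᵐ z ∂(volume.restrict K), m ≤ u z ∧ u z ≤ M)
    (p : ℝ) (hp : 1 < p) (c : ℝ) (hc : c ∈ Ioo (0:ℝ) 1)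
    (hD : ∀ a ∈ Ioo (0:ℝ) 1, ∀ M > (0:ℝ), ∀ μm : ℝ, ∃ ν ∈ Ioo (0:ℝ) 1,
      ∀ (z : (Fin N → ℝ) × ℝ) (ρ : ℝ), 0 < ρ →
        ball z.1 ρ ×ˢ Ioo (z.2 - ρ ^ p) (z.2 + ρ ^ p) ⊆ ΩT →
        (∀ᵐ w ∂(volume.restrict (ball z.1 ρ ×ˢ Ioo (z.2 - ρ ^ p) (z.2 + ρ ^ p))),
          μm ≤ u w) →
        volume {w ∈ ball z.1 ρ ×ˢ Ioo (z.2 - ρ ^ p) (z.2 + ρ ^ p) | u w ≤ μm + M} ≤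
          ENNReal.ofReal ν *
            volume (ball z.1 ρ ×ˢ Ioo (z.2 - ρ ^ p) (z.2 + ρ ^ p)) →
        ∀ᵐ w ∂(volume.restrict
            (ball z.1 (c*ρ) ×ˢ Ioo (z.2 - (c*ρ) ^ p) (z.2 + (c*ρ) ^ p))),
          μm + a * M ≤ u w)
    (hD' : ∀ a ∈ Ioo (0:ℝ) 1, ∀ M > (0:ℝ), ∀ μm : ℝ, ∃ ν ∈ Ioo (0:ℝ) 1,
      ∀ (z : (Fin N → ℝ) × ℝ) (ρ : ℝ), 0 < ρ →
        ball z.1 ρ ×ˢ Ioo (z.2 - ρ ^ p) (z.2 + ρ ^ p) ⊆ ΩT →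
        (∀ᵐ w ∂(volume.restrict (ball z.1 ρ ×ˢ Ioo (z.2 - ρ ^ p) (z.2 + ρ ^ p))),
          μm ≤ -u w) →
        volume {w ∈ ball z.1 ρ ×ˢ Ioo (z.2 - ρ ^ p) (z.2 + ρ ^ p) | -u w ≤ μm + M} ≤
          ENNReal.ofReal ν *
            volume (ball z.1 ρ ×ˢ Ioo (z.2 - ρ ^ p) (z.2 + ρ ^ p)) →
        ∀ᵐ w ∂(volume.restrict
            (ball z.1 (c*ρ) ×ˢ Ioo (z.2 - (c*ρ) ^ p) (z.2 + (c*ρ) ^ p))),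
          μm + a * M ≤ -u w)
    (ustar ustarU : (Fin N → ℝ) × ℝ → EReal)
    (hstar : ∀ z ∈ ΩT, Tendsto (fun r : ℝ =>
        essInf (fun w => (u w : EReal))
          (volume.restrict (ball z.1 r ×ˢ Ioo (z.2 - r ^ p) (z.2 + r ^ p))))
      (𝓝[>] 0) (𝓝 (ustar z)))
    (hstarU : ∀ z ∈ ΩT, Tendsto (fun r : ℝ =>
        essSup (fun w => (u w : EReal))
          (volume.restrict (ball z.1 r ×ˢ Ioo (z.2 - r ^ p) (z.2 + r ^ p))))
      (𝓝[>] 0) (𝓝 (ustarU z))) :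
    LowerSemicontinuousOn ustar ΩT ∧
    UpperSemicontinuousOn ustarU ΩT ∧
    (∀ z ∈ ΩT, ustar z ≤ ustarU z) ∧
    (∀ z ∈ ΩT,
      Tendsto (fun r : ℝ =>
          ⨍ w in ball z.1 r ×ˢ Ioo (z.2 - r ^ p) (z.2 + r ^ p), |u z - u w|)
        (𝓝[>] 0) (𝓝 0) →
      ustar z = (u z : EReal) ∧ ustarU z = (u z : EReal)) ∧
    (∀ᵐ z ∂(volume.restrict ΩT), ustar z = ustarU z) := by
  have hp₀ : 0 < p := zero_lt_one.trans hp
  have hmono := parabolicCylinder_mono (E := Fin N → ℝ) hp₀.le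
  have hle : ∀ z ∈ ΩT, ustar z ≤ ustarU z := fun z hz =>
    le_of_tendsto_essInf_of_tendsto_essSup
      (fun r hr => (volume_parabolicCylinder_pos z hr).ne') (hstar z hz) (hstarU z hz)
  have hLeb : ∀ z ∈ ΩT,
      Tendsto (fun r => ⨍ w in parabolicCylinder p z r, |u z - u w|) (𝓝[>] 0) (𝓝 0) →
      ustar z = (u z : EReal) ∧ ustarU z = (u z : EReal) := by
    intro z hz hz_leb
    obtain ⟨r, hr, hrΩ, hint, m, M, hmM⟩ :=
      exists_parabolicCylinder_integrableOn_bounded hp₀ hΩT huloc hbd hz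
    have hlower : (u z : EReal) ≤ ustar z :=
      EReal.coe_le_of_tendsto_essInf (hmono z) (hstar z hz) fun _ =>
        HasDeGiorgiProperty.exists_ae_ge_of_lt hD hp₀.le hc.1 hr hrΩ hint
          (hmM.mono fun _ h => h.1) hz_leb
    have hupper : ustarU z ≤ (u z : EReal) :=
      EReal.le_coe_of_tendsto_essSup (hmono z) (hstarU z hz) fun _ =>
        HasDeGiorgiProperty.exists_ae_le_of_gt_of_neg hD' hp₀.le hc.1 hr hrΩ hint
          (hmM.mono fun _ h => h.2) hz_leb
    exact ⟨le_antisymm ((hle z hz).trans hupper) hlower,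
      le_antisymm hupper (hlower.trans (hle z hz))⟩
  have hnhds := eventually_exists_parabolicCylinder_subset (E := Fin N → ℝ) hp₀
  refine ⟨lowerSemicontinuousOn_of_tendsto_essInf hmono hnhds hstar,
    upperSemicontinuousOn_of_tendsto_essSup hmono hnhds hstarU, hle, hLeb, ?_⟩
  filter_upwards [ae_tendsto_average_abs_sub_parabolicCylinder hp.le hΩT huloc,
    ae_restrict_mem hΩT.measurableSet] with z hz_leb hz
  rw [(hLeb z hz hz_leb).1, (hLeb z hz hz_leb).2]

/-- If `u` is measurable, locally essentially bounded, and both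
`u` and `-u` satisfy the De Giorgi property (D) with parabolic cylinders
`Q_ρ(z) = K_ρ(z₁) × (z₂ - ρᵖ, z₂ + ρᵖ)`, then the lower regularization `u_*`
is lower semicontinuous, the upper regularization `u^* = -(-u)_*` is upper
semicontinuous, `u_* ≤ u^*` everywhere on the domain, `u_* = u = u^*` at
every Lebesgue point, and `u_* = u^*` a.e. -/
theorem stmt17 {N : ℕ} (ΩT : Set ((Fin N → ℝ) × ℝ)) (hΩT : IsOpen ΩT)
    (u : (Fin N → ℝ) × ℝ → ℝ) (hu : Measurable u)
    (huloc : LocallyIntegrableOn u ΩT volume)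
    (hbd : ∀ K ⊆ ΩT, IsCompact K →
      ∃ m M : ℝ, ∀ᵐ z ∂(volume.restrict K), m ≤ u z ∧ u z ≤ M)
    (p : ℝ) (hp : 1 < p) (c : ℝ) (hc : c ∈ Ioo (0:ℝ) 1)
    (hD : ∀ a ∈ Ioo (0:ℝ) 1, ∀ M > (0:ℝ), ∀ μm : ℝ, ∃ ν ∈ Ioo (0:ℝ) 1,
      ∀ (z : (Fin N → ℝ) × ℝ) (ρ : ℝ), 0 < ρ →
        ball z.1 ρ ×ˢ Ioo (z.2 - ρ ^ p) (z.2 + ρ ^ p) ⊆ ΩT →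
        (∀ᵐ w ∂(volume.restrict (ball z.1 ρ ×ˢ Ioo (z.2 - ρ ^ p) (z.2 + ρ ^ p))),
          μm ≤ u w) →
        volume {w ∈ ball z.1 ρ ×ˢ Ioo (z.2 - ρ ^ p) (z.2 + ρ ^ p) | u w ≤ μm + M} ≤
          ENNReal.ofReal ν *
            volume (ball z.1 ρ ×ˢ Ioo (z.2 - ρ ^ p) (z.2 + ρ ^ p)) →
        ∀ᵐ w ∂(volume.restrict
            (ball z.1 (c*ρ) ×ˢ Ioo (z.2 - (c*ρ) ^ p) (z.2 + (c*ρ) ^ p))),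
          μm + a * M ≤ u w)
    (hD' : ∀ a ∈ Ioo (0:ℝ) 1, ∀ M > (0:ℝ), ∀ μm : ℝ, ∃ ν ∈ Ioo (0:ℝ) 1,
      ∀ (z : (Fin N → ℝ) × ℝ) (ρ : ℝ), 0 < ρ →
        ball z.1 ρ ×ˢ Ioo (z.2 - ρ ^ p) (z.2 + ρ ^ p) ⊆ ΩT →
        (∀ᵐ w ∂(volume.restrict (ball z.1 ρ ×ˢ Ioo (z.2 - ρ ^ p) (z.2 + ρ ^ p))),
          μm ≤ -u w) →
        volume {w ∈ ball z.1 ρ ×ˢ Ioo (z.2 - ρ ^ p) (z.2 + ρ ^ p) | -u w ≤ μm + M} ≤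
          ENNReal.ofReal ν *
            volume (ball z.1 ρ ×ˢ Ioo (z.2 - ρ ^ p) (z.2 + ρ ^ p)) →
        ∀ᵐ w ∂(volume.restrict
            (ball z.1 (c*ρ) ×ˢ Ioo (z.2 - (c*ρ) ^ p) (z.2 + (c*ρ) ^ p))),
          μm + a * M ≤ -u w)
    (ustar ustarU : (Fin N → ℝ) × ℝ → EReal)
    (hstar : ∀ z ∈ ΩT, Tendsto (fun r : ℝ =>
        essInf (fun w => (u w : EReal))
          (volume.restrict (ball z.1 r ×ˢ Ioo (z.2 - r ^ p) (z.2 + r ^ p))))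
      (𝓝[>] 0) (𝓝 (ustar z)))
    (hstarU : ∀ z ∈ ΩT, Tendsto (fun r : ℝ =>
        essSup (fun w => (u w : EReal))
          (volume.restrict (ball z.1 r ×ˢ Ioo (z.2 - r ^ p) (z.2 + r ^ p))))
      (𝓝[>] 0) (𝓝 (ustarU z))) :
    LowerSemicontinuousOn ustar ΩT ∧
    UpperSemicontinuousOn ustarU ΩT ∧
    (∀ z ∈ ΩT, ustar z ≤ ustarU z) ∧
    (∀ z ∈ ΩT,
      Tendsto (fun r : ℝ =>
          ⨍ w in ball z.1 r ×ˢ Ioo (z.2 - r ^ p) (z.2 + r ^ p), |u z - u w|)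
        (𝓝[>] 0) (𝓝 0) →
      ustar z = (u z : EReal) ∧ ustarU z = (u z : EReal)) ∧
    (∀ᵐ z ∂(volume.restrict ΩT), ustar z = ustarU z) :=
  stmt17_general ΩT hΩT u huloc hbd p hp c hc hD hD' ustar ustarU hstar hstarU
end
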